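/- Let Q and D be countable types, pQ a probability mass function on Q, pneg a probability mass function on D, and for each q ∈ Q let ppos(· | q) be a probability mass function on D such that ppos(d | q) > 0 implies pneg(d) > 0. Fix K ∈ ℕ and consider the joint law in which Q ~ pQ, the index I is uniform on {0, …, K} independent of Q, and conditionally on (Q = q, I = i) the candidates are independent with D_i ~ ppos(· | q) and D_j ~ pneg for every j ≠ i. Then for every q with pQ(q) > 0 and every tuple d = (d_0, …, d_K) with pneg(d_j) > 0 for all j and positive joint probability, the posterior satisfies P(I = i | Q = q, (D_0, …, D_K) = d) = (ppos(d_i | q) / pneg(d_i)) / ∑_{j=0}^{K} (ppos(d_j | q) / pneg(d_j)). -/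

import Mathlib

/-!
The joint probability of `(q, i, d)` is a factor `pQ q * (K+1)⁻¹ * ∏ j, pneg (d j)` that does
not depend on `i`, times the density ratio `ppos q (d i) / pneg (d i)`; the factor cancels
in the posterior.
-/

theorem Fintype.prod_ite_eq_div_mul {ι K : Type*} [Fintype ι] [DecidableEq ι] [Field K]
    (f g : ι → K) (i : ι) (hg : g i ≠ 0) :
    ∏ j, (if j = i then f j else g j) = f i / g i * ∏ j, g j := by
  rw [Fintype.prod_eq_mul_prod_compl i, Fintype.prod_eq_mul_prod_compl i g, if_pos rfl,
    Finset.prod_congr rfl fun j hj => if_neg (Finset.mem_compl.1 hj ∘ Finset.mem_singleton.2)]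
  field_simp

theorem div_sum_eq_div_sum_of_eq_const_mul {ι K : Type*} [Fintype ι] [Field K]
    {p w : ι → K} {c : K} (hc : c ≠ 0) (hp : ∀ i, p i = c * w i) (i : ι) :
    p i / ∑ j, p j = w i / ∑ j, w j := by
  simp only [hp, ← Finset.mul_sum, mul_div_mul_left _ _ hc]

theorem infoNCE_posterior_general
    {Q D : Type*}
    (pQ : Q → ℝ)
    (pneg : D → ℝ)
    (ppos : Q → D → ℝ)
    (K : ℕ)
    (joint : Q → Fin (K + 1) → (Fin (K + 1) → D) → ℝ)
    (hjoint : ∀ q i d, joint q i d =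
      pQ q * ((K + 1 : ℝ))⁻¹ * ∏ j, (if j = i then ppos q (d j) else pneg (d j)))
    (q : Q) (hq : 0 < pQ q)
    (d : Fin (K + 1) → D) (hd : ∀ j, 0 < pneg (d j))
    (i : Fin (K + 1)) :
    joint q i d / (∑ i', joint q i' d) =
      (ppos q (d i) / pneg (d i)) / ∑ j, ppos q (d j) / pneg (d j) := by
  have hc : pQ q * ((K + 1 : ℝ))⁻¹ * ∏ j, pneg (d j) ≠ 0 :=
    (mul_pos (mul_pos hq (by positivity)) (Finset.prod_pos fun j _ => hd j)).ne'
  refine div_sum_eq_div_sum_of_eq_const_mul (p := fun i' => joint q i' d)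
    (w := fun j => ppos q (d j) / pneg (d j)) hc (fun i' => ?_) i
  rw [hjoint, Fintype.prod_ite_eq_div_mul _ _ i' (hd i').ne']
  ring

/-- **Posterior over the positive index in InfoNCE sampling.**
Queries `q ~ pQ`, index `I` uniform on `{0, …, K}` independent of `Q`, and conditionally
on `(Q = q, I = i)` the candidates are independent with `D_i ~ ppos(· | q)` and
`D_j ~ pneg` for `j ≠ i`.  The joint probability of `(q, i, d)` is therefore
`pQ q * (K+1)⁻¹ * ∏ j, (if j = i then ppos q (d j) else pneg (d j))`, and the posterior
`P(I = i | Q = q, D = d)` is this joint probability divided by its sum over `i`.  For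
every `q` with `pQ q > 0` and tuple `d` with `pneg (d j) > 0` for all `j` and positive
joint probability, the posterior equals
`(ppos q (d i) / pneg (d i)) / ∑ j, ppos q (d j) / pneg (d j)`. -/
theorem infoNCE_posterior
    {Q D : Type*} [Countable Q] [Countable D]
    (pQ : Q → ℝ) (hpQ0 : ∀ q, 0 ≤ pQ q) (hpQ1 : ∑' q, pQ q = 1)
    (pneg : D → ℝ) (hpneg0 : ∀ d, 0 ≤ pneg d) (hpneg1 : ∑' d, pneg d = 1)
    (ppos : Q → D → ℝ) (hppos0 : ∀ q d, 0 ≤ ppos q d)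
    (hppos1 : ∀ q, ∑' d, ppos q d = 1)
    (habs : ∀ q d, 0 < ppos q d → 0 < pneg d)
    (K : ℕ)
    (joint : Q → Fin (K + 1) → (Fin (K + 1) → D) → ℝ)
    (hjoint : ∀ q i d, joint q i d =
      pQ q * ((K + 1 : ℝ))⁻¹ * ∏ j, (if j = i then ppos q (d j) else pneg (d j)))
    (q : Q) (hq : 0 < pQ q)
    (d : Fin (K + 1) → D) (hd : ∀ j, 0 < pneg (d j))
    (hpos : 0 < ∑ i, joint q i d)
    (i : Fin (K + 1)) :
    joint q i d / (∑ i', joint q i' d) =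
      (ppos q (d i) / pneg (d i)) / ∑ j, ppos q (d j) / pneg (d j) :=
  infoNCE_posterior_general pQ pneg ppos K joint hjoint q hq d hd i
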